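/- Let A, β, γ be finite index types, let ρ be a density matrix on A × β × γ, and let {N_x^0}_{x∈X} and {N_x^1}_{x∈X} be two POVMs on A with overlap c = max_{x,z∈X} ‖√(N_x^0)·√(N_z^1)‖². Then for all POVMs {P_x^θ}_{x∈X} on β and {Q_x^θ}_{x∈X} on γ (θ ∈ {0,1}): (1/2)·∑_{θ∈{0,1}} ∑_{x∈X} Re tr((N_x^θ ⊗ P_x^θ ⊗ 1_γ)·ρ) + (1/2)·∑_{θ∈{0,1}} ∑_{x∈X} Re tr((N_x^θ ⊗ 1_β ⊗ Q_x^θ)·ρ) ≤ 1 + √c. -/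

import Mathlib

open Matrix ComplexOrder Kronecker

/-- The Schatten ∞-norm of a square complex matrix: the operator norm induced by the
Euclidean norm (the largest singular value). -/
noncomputable def opNorm {n : Type*} [Fintype n] [DecidableEq n] (M : Matrix n n ℂ) : ℝ :=
  ‖Matrix.toEuclideanCLM (𝕜 := ℂ) M‖

/-- The positive semidefinite square root, with its Mathlib (Dec 2024) definition,
since removed from Mathlib. -/
noncomputable def Matrix.PosSemidef.sqrt {n 𝕜 : Type*} [Fintype n] [DecidableEq n] [RCLike 𝕜]
    {A : Matrix n n 𝕜} (hA : A.PosSemidef) : Matrix n n 𝕜 :=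
  hA.1.eigenvectorUnitary.1 * diagonal ((↑) ∘ (√·) ∘ hA.1.eigenvalues) *
  (star hA.1.eigenvectorUnitary : Matrix n n 𝕜)

/-- A POVM on a finite index type. -/
def IsPOVM {ι β : Type*} [Fintype ι] [Fintype β] [DecidableEq β]
    (P : ι → Matrix β β ℂ) : Prop :=
  (∀ x, (P x).PosSemidef) ∧ ∑ x, P x = 1


set_option linter.unusedSectionVars false
set_option synthInstance.maxHeartbeats 1000000
set_option maxHeartbeats 4000000

namespace Matrix.PosSemidef
variable {n 𝕜 : Type*} [Fintype n] [DecidableEq n] [RCLike 𝕜] {A : Matrix n n 𝕜}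

lemma posSemidef_sqrt (hA : A.PosSemidef) : hA.sqrt.PosSemidef := by
  unfold Matrix.PosSemidef.sqrt
  have h := (PosSemidef.diagonal (d := ((↑) ∘ (√·) ∘ hA.1.eigenvalues : n → 𝕜)) ?_).mul_mul_conjTranspose_same (hA.1.eigenvectorUnitary.1)
  · exact h
  · intro i
    simp only [Function.comp_apply, Pi.zero_apply]
    exact RCLike.ofReal_nonneg.mpr (Real.sqrt_nonneg _)

lemma sqrt_mul_self (hA : A.PosSemidef) : hA.sqrt * hA.sqrt = A := by
  have hU : (star hA.1.eigenvectorUnitary : Matrix n n 𝕜) * hA.1.eigenvectorUnitary.1 = 1 :=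
    Unitary.coe_star_mul_self _
  have hE : diagonal ((↑) ∘ (√·) ∘ hA.1.eigenvalues : n → 𝕜) *
      diagonal ((↑) ∘ (√·) ∘ hA.1.eigenvalues : n → 𝕜)
      = diagonal (RCLike.ofReal ∘ hA.1.eigenvalues) := by
    rw [diagonal_mul_diagonal]
    congr 1
    funext i
    simp only [Function.comp_apply]
    rw [← RCLike.ofReal_mul, Real.mul_self_sqrt (hA.eigenvalues_nonneg i)]
  unfold Matrix.PosSemidef.sqrt
  calc _ = hA.1.eigenvectorUnitary.1 * (diagonal ((↑) ∘ (√·) ∘ hA.1.eigenvalues : n → 𝕜) *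
        ((star hA.1.eigenvectorUnitary : Matrix n n 𝕜) * hA.1.eigenvectorUnitary.1) *
        diagonal ((↑) ∘ (√·) ∘ hA.1.eigenvalues : n → 𝕜)) *
        (star hA.1.eigenvectorUnitary : Matrix n n 𝕜) := by simp only [Matrix.mul_assoc]
    _ = A := by
      rw [hU, Matrix.mul_one, hE]
      exact hA.1.spectral_theorem.symm

end Matrix.PosSemidef

lemma Matrix.posSemidef_iff_eq_transpose_mul_self {n : Type*} [Fintype n] [DecidableEq n]
    {A : Matrix n n ℂ} : A.PosSemidef ↔ ∃ B : Matrix n n ℂ, A = Bᴴ * B := by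
  constructor
  · intro hA
    exact ⟨hA.sqrt, by rw [hA.posSemidef_sqrt.1.eq, hA.sqrt_mul_self]⟩
  · rintro ⟨B, rfl⟩
    exact Matrix.posSemidef_conjTranspose_mul_self B




section helpers
variable {m n : Type*} [Fintype m] [Fintype n] [DecidableEq m] [DecidableEq n]

lemma kron_conjT (A : Matrix m m ℂ) (B : Matrix n n ℂ) : (A ⊗ₖ B)ᴴ = Aᴴ ⊗ₖ Bᴴ := by
  ext ⟨i1,i2⟩ ⟨j1,j2⟩
  simp [conjTranspose_apply, kroneckerMap_apply]

lemma kron_psd {A : Matrix m m ℂ} {B : Matrix n n ℂ} (hA : A.PosSemidef) (hB : B.PosSemidef) :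
    (A ⊗ₖ B).PosSemidef := by
  obtain ⟨A1, hA1⟩ := posSemidef_iff_eq_transpose_mul_self.mp hA
  obtain ⟨B1, hB1⟩ := posSemidef_iff_eq_transpose_mul_self.mp hB
  refine posSemidef_iff_eq_transpose_mul_self.mpr ⟨A1 ⊗ₖ B1, ?_⟩
  rw [hA1, hB1, kron_conjT, ← Matrix.mul_kronecker_mul]

lemma sum_kron {ι : Type*} (s : Finset ι) (f : ι → Matrix m m ℂ) (B : Matrix n n ℂ) :
    (∑ i ∈ s, f i) ⊗ₖ B = ∑ i ∈ s, (f i ⊗ₖ B) := by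
  ext ⟨i1,i2⟩ ⟨j1,j2⟩
  simp [kroneckerMap_apply, Matrix.sum_apply, Finset.sum_mul]

lemma kron_sum {ι : Type*} (s : Finset ι) (A : Matrix m m ℂ) (f : ι → Matrix n n ℂ) :
    A ⊗ₖ (∑ i ∈ s, f i) = ∑ i ∈ s, (A ⊗ₖ f i) := by
  ext ⟨i1,i2⟩ ⟨j1,j2⟩
  simp [kroneckerMap_apply, Matrix.sum_apply, Finset.mul_sum]

end helpers




section norms
variable {n m : Type*} [Fintype n] [DecidableEq n] [Fintype m] [DecidableEq m]

noncomputable def en (v : n → ℂ) : ℝ := ‖(WithLp.equiv 2 (n → ℂ)).symm v‖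

lemma en_nonneg (v : n → ℂ) : 0 ≤ en v := norm_nonneg _

lemma dot_self_eq_en_sq (v : n → ℂ) : (star v ⬝ᵥ v) = ((en v : ℂ))^2 := by
  rw [dotProduct_comm, ← EuclideanSpace.inner_toLp_toLp, inner_self_eq_norm_sq_to_K]
  rfl

lemma cs_abs (a b : n → ℂ) : ‖star a ⬝ᵥ b‖ ≤ en a * en b := by
  rw [dotProduct_comm, ← EuclideanSpace.inner_toLp_toLp]
  exact norm_inner_le_norm _ _

lemma en_mulVec_le (M : Matrix n n ℂ) (v : n → ℂ) : en (M *ᵥ v) ≤ opNorm M * en v := by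
  have h := (Matrix.toEuclideanCLM (𝕜 := ℂ) M).le_opNorm ((WithLp.equiv 2 (n → ℂ)).symm v)
  exact h

lemma opNorm_nonneg (M : Matrix n n ℂ) : 0 ≤ opNorm M := norm_nonneg _

lemma opNorm_conjT (M : Matrix n n ℂ) : opNorm Mᴴ = opNorm M := by
  unfold opNorm
  rw [show (Mᴴ) = star M from rfl, map_star]
  exact LinearIsometryEquiv.norm_map (ContinuousLinearMap.adjoint :
    (EuclideanSpace ℂ n →L[ℂ] EuclideanSpace ℂ n) ≃ₗᵢ⋆[ℂ] _) _

lemma en_sq_eq (v : n → ℂ) : en v ^ 2 = ∑ i, ‖v i‖ ^ 2 := by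
  have h : en v = Real.sqrt (∑ i, ‖v i‖ ^ 2) := by
    rw [en, EuclideanSpace.norm_eq]
    rfl
  rw [h, Real.sq_sqrt]
  exact Finset.sum_nonneg fun i _ => sq_nonneg _

lemma kron_one_mulVec {q : Type*} [Fintype q] [DecidableEq q] (G : Matrix m m ℂ)
    (v : m × q → ℂ) (i : m) (k : q) :
    ((G ⊗ₖ (1 : Matrix q q ℂ)) *ᵥ v) (i,k) = (G *ᵥ fun j => v (j,k)) i := by
  simp [Matrix.mulVec, dotProduct, Fintype.sum_prod_type, kroneckerMap_apply,
    Matrix.one_apply, mul_ite, ite_mul, mul_assoc]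

lemma en_kron_one_mulVec_le {q : Type*} [Fintype q] [DecidableEq q] (G : Matrix m m ℂ)
    (v : m × q → ℂ) :
    en ((G ⊗ₖ (1 : Matrix q q ℂ)) *ᵥ v) ≤ opNorm G * en v := by
  have h2 : en ((G ⊗ₖ (1 : Matrix q q ℂ)) *ᵥ v) ^ 2 ≤ (opNorm G * en v) ^ 2 := by
    rw [en_sq_eq, mul_pow, en_sq_eq]
    calc ∑ p : m × q, ‖((G ⊗ₖ (1 : Matrix q q ℂ)) *ᵥ v) p‖ ^ 2
        = ∑ k : q, ∑ i : m, ‖(G *ᵥ fun j => v (j,k)) i‖ ^ 2 := by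
          rw [Fintype.sum_prod_type, Finset.sum_comm]
          simp [kron_one_mulVec]
      _ ≤ ∑ k : q, (opNorm G) ^ 2 * ∑ j : m, ‖v (j,k)‖ ^ 2 := by
          refine Finset.sum_le_sum fun k _ => ?_
          have := en_mulVec_le G (fun j => v (j,k))
          have h3 : en (G *ᵥ fun j => v (j,k)) ^ 2 ≤ (opNorm G * en (fun j => v (j,k))) ^ 2 :=
            pow_le_pow_left₀ (en_nonneg _) this 2
          rw [en_sq_eq, mul_pow, en_sq_eq] at h3
          exact h3
      _ = (opNorm G) ^ 2 * ∑ p : m × q, ‖v p‖ ^ 2 := by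
          rw [Fintype.sum_prod_type, Finset.sum_comm, ← Finset.mul_sum]
  exact (pow_le_pow_iff_left₀ (en_nonneg _) (mul_nonneg (opNorm_nonneg _) (en_nonneg _)) two_ne_zero).mp h2
end norms


section psd
variable {n : Type*} [Fintype n] [DecidableEq n]

lemma psd_sum {ι : Type*} (s : Finset ι) (f : ι → Matrix n n ℂ)
    (h : ∀ i ∈ s, (f i).PosSemidef) : (∑ i ∈ s, f i).PosSemidef := by
  classical
  induction s using Finset.induction with
  | empty => simpa using Matrix.PosSemidef.zero
  | @insert a s hx ih =>
    rw [Finset.sum_insert hx]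
    exact (h _ (Finset.mem_insert_self _ _)).add (ih fun i hi => h i (Finset.mem_insert_of_mem hi))

lemma psd_diag_nonneg {M : Matrix n n ℂ} (hM : M.PosSemidef) (i : n) : 0 ≤ M i i := by
  exact hM.diag_nonneg

lemma psd_trace_nonneg {M : Matrix n n ℂ} (hM : M.PosSemidef) : 0 ≤ M.trace := by
  rw [Matrix.trace]
  exact Finset.sum_nonneg fun i _ => psd_diag_nonneg hM i

lemma psd_mul_trace_nonneg {A B : Matrix n n ℂ} (hA : A.PosSemidef) (hB : B.PosSemidef) :
    0 ≤ (A * B).trace := by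
  obtain ⟨C, hC⟩ := posSemidef_iff_eq_transpose_mul_self.mp hB
  rw [hC, ← Matrix.mul_assoc, Matrix.trace_mul_cycle]
  exact psd_trace_nonneg (hA.mul_mul_conjTranspose_same C)

lemma sum_mulVec' {ι : Type*} (s : Finset ι) (f : ι → Matrix n n ℂ) (v : n → ℂ) :
    (∑ i ∈ s, f i) *ᵥ v = ∑ i ∈ s, f i *ᵥ v := by
  ext j
  simp [Matrix.mulVec, dotProduct, Matrix.sum_apply, Finset.sum_apply, Finset.sum_mul]
  rw [Finset.sum_comm]

lemma dot_sum {ι : Type*} (s : Finset ι) (v : n → ℂ) (w : ι → (n → ℂ)) :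
    v ⬝ᵥ (∑ i ∈ s, w i) = ∑ i ∈ s, v ⬝ᵥ w i := by
  simp [dotProduct, Finset.sum_apply, Finset.mul_sum]
  rw [Finset.sum_comm]

lemma herm_form_star {M : Matrix n n ℂ} (hM : M.IsHermitian) (v : n → ℂ) :
    star (star v ⬝ᵥ M *ᵥ v) = star v ⬝ᵥ M *ᵥ v := by
  conv_lhs => rw [Matrix.star_dotProduct, star_star, Matrix.star_mulVec,
    ← Matrix.dotProduct_mulVec, hM.eq]

lemma herm_form_real {M : Matrix n n ℂ} (hM : M.IsHermitian) (v : n → ℂ) :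
    (star v ⬝ᵥ M *ᵥ v).im = 0 := by
  have := herm_form_star hM v
  have h2 := congrArg Complex.im this
  simp at h2
  linarith

end psd

section moreHelpers
variable {m n : Type*} [Fintype m] [Fintype n] [DecidableEq m] [DecidableEq n]

lemma kron_herm {A : Matrix m m ℂ} {B : Matrix n n ℂ} (hA : A.IsHermitian) (hB : B.IsHermitian) :
    (A ⊗ₖ B).IsHermitian := by
  show (A ⊗ₖ B)ᴴ = A ⊗ₖ B
  rw [kron_conjT, hA.eq, hB.eq]

lemma sub_kron (A B : Matrix m m ℂ) (C : Matrix n n ℂ) :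
    (A - B) ⊗ₖ C = A ⊗ₖ C - B ⊗ₖ C := by
  ext ⟨i1,i2⟩ ⟨j1,j2⟩
  simp [kroneckerMap_apply, sub_mul]

lemma kron_sub (A : Matrix m m ℂ) (B C : Matrix n n ℂ) :
    A ⊗ₖ (B - C) = A ⊗ₖ B - A ⊗ₖ C := by
  ext ⟨i1,i2⟩ ⟨j1,j2⟩
  simp [kroneckerMap_apply, mul_sub]

end moreHelpers

section key

variable {A β γ X : Type*} [Fintype A] [DecidableEq A] [Fintype β] [DecidableEq β]
  [Fintype γ] [DecidableEq γ] [Fintype X] [DecidableEq X]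

lemma key_lemma
    (N N' : X → Matrix A A ℂ) (P : X → Matrix β β ℂ) (Q : X → Matrix γ γ ℂ)
    (hN : ∀ x, (N x).PosSemidef) (hN' : ∀ z, (N' z).PosSemidef)
    (hP : ∀ x, (P x).PosSemidef) (hQ : ∀ z, (Q z).PosSemidef)
    (hNs : ∑ x, N x = 1) (hN's : ∑ z, N' z = 1)
    (hPs : ∑ x, P x = 1) (hQs : ∑ z, Q z = 1)
    (s : ℝ) (hs : 0 ≤ s)
    (hc : ∀ x z, opNorm ((hN x).sqrt * (hN' z).sqrt) ≤ s)
    (ρ : Matrix (A × β × γ) (A × β × γ) ℂ) (hρ : ρ.PosSemidef) (hρt : ρ.trace = 1) :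
    ((((∑ x, N x ⊗ₖ (P x ⊗ₖ (1 : Matrix γ γ ℂ))) +
       (∑ z, N' z ⊗ₖ ((1 : Matrix β β ℂ) ⊗ₖ Q z))) * ρ).trace).re ≤ 1 + s := by
  set Am := ∑ x, N x ⊗ₖ (P x ⊗ₖ (1 : Matrix γ γ ℂ)) with hAmdef
  set Bm := ∑ z, N' z ⊗ₖ ((1 : Matrix β β ℂ) ⊗ₖ Q z) with hBmdef
  have hAm : Am.PosSemidef :=
    psd_sum _ _ (fun x _ => kron_psd (hN x) (kron_psd (hP x) Matrix.PosSemidef.one))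
  have hBm : Bm.PosSemidef :=
    psd_sum _ _ (fun z _ => kron_psd (hN' z) (kron_psd Matrix.PosSemidef.one (hQ z)))
  have one_sub_P : ∀ x, ((1 : Matrix β β ℂ) - P x).PosSemidef := by
    intro x
    have h1 : (1 : Matrix β β ℂ) - P x = ∑ y ∈ Finset.univ.erase x, P y := by
      rw [← hPs, ← Finset.add_sum_erase _ _ (Finset.mem_univ x), add_sub_cancel_left]
    rw [h1]
    exact psd_sum _ _ (fun y _ => hP y)
  have one_sub_Q : ∀ z, ((1 : Matrix γ γ ℂ) - Q z).PosSemidef := by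
    intro z
    have h1 : (1 : Matrix γ γ ℂ) - Q z = ∑ y ∈ Finset.univ.erase z, Q y := by
      rw [← hQs, ← Finset.add_sum_erase _ _ (Finset.mem_univ z), add_sub_cancel_left]
    rw [h1]
    exact psd_sum _ _ (fun y _ => hQ y)
  have hA1 : ((1 : Matrix (A × β × γ) (A × β × γ) ℂ) - Am).PosSemidef := by
    have h1 : (1 : Matrix (A × β × γ) (A × β × γ) ℂ) - Am
        = ∑ x, N x ⊗ₖ (((1 : Matrix β β ℂ) - P x) ⊗ₖ (1 : Matrix γ γ ℂ)) := by
      have h2 : (1 : Matrix (A × β × γ) (A × β × γ) ℂ)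
          = ∑ x, N x ⊗ₖ ((1 : Matrix β β ℂ) ⊗ₖ (1 : Matrix γ γ ℂ)) := by
        rw [← sum_kron, hNs, Matrix.one_kronecker_one, Matrix.one_kronecker_one]
      rw [h2, hAmdef, ← Finset.sum_sub_distrib]
      refine Finset.sum_congr rfl fun x _ => ?_
      rw [sub_kron, kron_sub]
    rw [h1]
    exact psd_sum _ _ (fun x _ => kron_psd (hN x) (kron_psd (one_sub_P x) Matrix.PosSemidef.one))
  have hB1 : ((1 : Matrix (A × β × γ) (A × β × γ) ℂ) - Bm).PosSemidef := by
    have h1 : (1 : Matrix (A × β × γ) (A × β × γ) ℂ) - Bm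
        = ∑ z, N' z ⊗ₖ ((1 : Matrix β β ℂ) ⊗ₖ ((1 : Matrix γ γ ℂ) - Q z)) := by
      have h2 : (1 : Matrix (A × β × γ) (A × β × γ) ℂ)
          = ∑ z, N' z ⊗ₖ ((1 : Matrix β β ℂ) ⊗ₖ (1 : Matrix γ γ ℂ)) := by
        rw [← sum_kron, hN's, Matrix.one_kronecker_one, Matrix.one_kronecker_one]
      rw [h2, hBmdef, ← Finset.sum_sub_distrib]
      refine Finset.sum_congr rfl fun z _ => ?_
      rw [kron_sub, kron_sub]
    rw [h1]
    exact psd_sum _ _ (fun z _ => kron_psd (hN' z) (kron_psd Matrix.PosSemidef.one (one_sub_Q z)))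
  classical
  have en_sq_form : ∀ (M : Matrix (A × β × γ) (A × β × γ) ℂ), M.IsHermitian →
      ∀ v : (A × β × γ) → ℂ, en (M *ᵥ v) ^ 2 = (star v ⬝ᵥ (M * M) *ᵥ v).re := by
    intro M hherm v
    have h3 : star (M *ᵥ v) ⬝ᵥ (M *ᵥ v) = star v ⬝ᵥ (M * M) *ᵥ v := by
      rw [Matrix.star_mulVec, ← Matrix.dotProduct_mulVec, hherm.eq, Matrix.mulVec_mulVec]
    rw [← h3, dot_self_eq_en_sq]
    simp [← Complex.ofReal_pow]
  have en_sq_re : ∀ u : (A × β × γ) → ℂ, (star u ⬝ᵥ u).re = en u ^ 2 := by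
    intro u
    rw [dot_self_eq_en_sq]
    simp [← Complex.ofReal_pow]
  have sq_le : ∀ (M : Matrix (A × β × γ) (A × β × γ) ℂ) (hM : M.PosSemidef),
      ((1 : Matrix (A × β × γ) (A × β × γ) ℂ) - M).PosSemidef → ∀ v : (A × β × γ) → ℂ,
      en (M *ᵥ v) ^ 2 ≤ (star v ⬝ᵥ M *ᵥ v).re := by
    intro M hM hM1 v
    obtain ⟨S, hSH, hSS⟩ : ∃ S : Matrix (A × β × γ) (A × β × γ) ℂ, Sᴴ = S ∧ S * S = M :=
      ⟨hM.sqrt, hM.posSemidef_sqrt.1.eq, hM.sqrt_mul_self⟩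
    have hMM : (M - M * M).PosSemidef := by
      have h1 : S * ((1 : Matrix (A × β × γ) (A × β × γ) ℂ) - M) * Sᴴ
          = M - M * M := by
        rw [hSH, ← hSS]
        noncomm_ring
      rw [← h1]
      exact hM1.mul_mul_conjTranspose_same _
    have h5 : 0 ≤ (star v ⬝ᵥ (M - M * M) *ᵥ v).re := by
      simpa using hMM.re_dotProduct_nonneg v
    rw [Matrix.sub_mulVec, dotProduct_sub, Complex.sub_re] at h5
    rw [en_sq_form M hM.1 v]
    linarith
  have hform : ∀ (M K : Matrix (A × β × γ) (A × β × γ) ℂ), M.IsHermitian →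
      ∀ v : (A × β × γ) → ℂ, star v ⬝ᵥ (M * K) *ᵥ v = star (M *ᵥ v) ⬝ᵥ (K *ᵥ v) := by
    intro M K hherm v
    rw [← Matrix.mulVec_mulVec, Matrix.dotProduct_mulVec, Matrix.star_mulVec, hherm.eq]
  set M1 : X → X → Matrix (A × β × γ) (A × β × γ) ℂ :=
    fun x z => (hN x).sqrt ⊗ₖ ((hP x).sqrt ⊗ₖ (hQ z).sqrt) with hM1def
  set M2 : X → X → Matrix (A × β × γ) (A × β × γ) ℂ :=
    fun x z => (hN' z).sqrt ⊗ₖ ((hP x).sqrt ⊗ₖ (hQ z).sqrt) with hM2def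
  have hM1herm : ∀ x z, (M1 x z).IsHermitian := fun x z =>
    kron_herm (hN x).posSemidef_sqrt.1
      (kron_herm (hP x).posSemidef_sqrt.1 (hQ z).posSemidef_sqrt.1)
  have hM2herm : ∀ x z, (M2 x z).IsHermitian := fun x z =>
    kron_herm (hN' z).posSemidef_sqrt.1
      (kron_herm (hP x).posSemidef_sqrt.1 (hQ z).posSemidef_sqrt.1)
  have hM1sq : ∀ x z, M1 x z * M1 x z = N x ⊗ₖ (P x ⊗ₖ Q z) := by
    intro x z
    simp only [hM1def]
    rw [← Matrix.mul_kronecker_mul, ← Matrix.mul_kronecker_mul, (hN x).sqrt_mul_self,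
      (hP x).sqrt_mul_self, (hQ z).sqrt_mul_self]
  have hM2sq : ∀ x z, M2 x z * M2 x z = N' z ⊗ₖ (P x ⊗ₖ Q z) := by
    intro x z
    simp only [hM2def]
    rw [← Matrix.mul_kronecker_mul, ← Matrix.mul_kronecker_mul, (hN' z).sqrt_mul_self,
      (hP x).sqrt_mul_self, (hQ z).sqrt_mul_self]
  have hfact : ∀ x z, (N x * N' z) ⊗ₖ (P x ⊗ₖ Q z)
      = M1 x z * (((((hN x).sqrt * (hN' z).sqrt)) ⊗ₖ (1 : Matrix (β × γ) (β × γ) ℂ)) * M2 x z) := by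
    intro x z
    simp only [hM1def, hM2def]
    rw [← Matrix.mul_kronecker_mul, Matrix.one_mul, ← Matrix.mul_kronecker_mul,
      ← Matrix.mul_kronecker_mul, (hP x).sqrt_mul_self, (hQ z).sqrt_mul_self]
    congr 1
    rw [show (hN x).sqrt * ((hN x).sqrt * (hN' z).sqrt * (hN' z).sqrt)
        = ((hN x).sqrt * (hN x).sqrt) * ((hN' z).sqrt * (hN' z).sqrt) by noncomm_ring,
      (hN x).sqrt_mul_self, (hN' z).sqrt_mul_self]
  have hABex : Am * Bm = ∑ p : X × X, (N p.1 * N' p.2) ⊗ₖ (P p.1 ⊗ₖ Q p.2) := by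
    rw [hAmdef, hBmdef, Finset.sum_mul_sum, Fintype.sum_prod_type]
    refine Finset.sum_congr rfl fun x _ => Finset.sum_congr rfl fun z _ => ?_
    rw [← Matrix.mul_kronecker_mul, ← Matrix.mul_kronecker_mul, Matrix.mul_one, Matrix.one_mul]
  have hAq : ∑ p : X × X, (N p.1 ⊗ₖ (P p.1 ⊗ₖ Q p.2)) = Am := by
    rw [Fintype.sum_prod_type, hAmdef]
    refine Finset.sum_congr rfl fun x _ => ?_
    simp only
    rw [← kron_sum, ← kron_sum, hQs]
  have hBq : ∑ p : X × X, (N' p.2 ⊗ₖ (P p.1 ⊗ₖ Q p.2)) = Bm := by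
    rw [Fintype.sum_prod_type_right, hBmdef]
    refine Finset.sum_congr rfl fun z _ => ?_
    simp only
    rw [← kron_sum, ← sum_kron, hPs]
  have hQF : ∀ v : (A × β × γ) → ℂ,
      (star v ⬝ᵥ (Am + Bm) *ᵥ v).re ≤ (1 + s) * (star v ⬝ᵥ v).re := by
    intro v
    set al := (star v ⬝ᵥ Am *ᵥ v).re with haldef
    set bl := (star v ⬝ᵥ Bm *ᵥ v).re with hbldef
    have hal0 : 0 ≤ al := by simpa [haldef] using hAm.re_dotProduct_nonneg v
    have hbl0 : 0 ≤ bl := by simpa [hbldef] using hBm.re_dotProduct_nonneg v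
    have hsum1 : ∑ p : X × X, en (M1 p.1 p.2 *ᵥ v) ^ 2 = al := by
      have h1 : ∀ p : X × X, en (M1 p.1 p.2 *ᵥ v) ^ 2
          = (star v ⬝ᵥ (N p.1 ⊗ₖ (P p.1 ⊗ₖ Q p.2)) *ᵥ v).re := by
        intro p
        rw [en_sq_form _ (hM1herm p.1 p.2) v, hM1sq p.1 p.2]
      rw [haldef, ← hAq, sum_mulVec', dot_sum, Complex.re_sum]
      exact Finset.sum_congr rfl fun p _ => h1 p
    have hsum2 : ∑ p : X × X, en (M2 p.1 p.2 *ᵥ v) ^ 2 = bl := by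
      have h1 : ∀ p : X × X, en (M2 p.1 p.2 *ᵥ v) ^ 2
          = (star v ⬝ᵥ (N' p.2 ⊗ₖ (P p.1 ⊗ₖ Q p.2)) *ᵥ v).re := by
        intro p
        rw [en_sq_form _ (hM2herm p.1 p.2) v, hM2sq p.1 p.2]
      rw [hbldef, ← hBq, sum_mulVec', dot_sum, Complex.re_sum]
      exact Finset.sum_congr rfl fun p _ => h1 p
    have hcs : (star (Am *ᵥ v) ⬝ᵥ (Bm *ᵥ v)).re ≤ s * (Real.sqrt al * Real.sqrt bl) := by
      have h1 : star (Am *ᵥ v) ⬝ᵥ (Bm *ᵥ v)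
          = ∑ p : X × X, star v ⬝ᵥ ((N p.1 * N' p.2) ⊗ₖ (P p.1 ⊗ₖ Q p.2)) *ᵥ v := by
        rw [← hform Am Bm hAm.1 v, hABex, sum_mulVec', dot_sum]
      have h2 : ∀ p : X × X, ‖star v ⬝ᵥ ((N p.1 * N' p.2) ⊗ₖ (P p.1 ⊗ₖ Q p.2)) *ᵥ v‖
          ≤ s * (en (M1 p.1 p.2 *ᵥ v) * en (M2 p.1 p.2 *ᵥ v)) := by
        intro p
        rw [hfact p.1 p.2, hform _ _ (hM1herm p.1 p.2), ← Matrix.mulVec_mulVec]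
        have c1 := cs_abs (M1 p.1 p.2 *ᵥ v)
          ((((hN p.1).sqrt * (hN' p.2).sqrt) ⊗ₖ (1 : Matrix (β × γ) (β × γ) ℂ)) *ᵥ
            (M2 p.1 p.2 *ᵥ v))
        have c2 := en_kron_one_mulVec_le ((hN p.1).sqrt * (hN' p.2).sqrt) (M2 p.1 p.2 *ᵥ v)
        have c3 := hc p.1 p.2
        have e1 := en_nonneg (M1 p.1 p.2 *ᵥ v)
        have e2 := en_nonneg (M2 p.1 p.2 *ᵥ v)
        calc ‖star (M1 p.1 p.2 *ᵥ v) ⬝ᵥ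
              ((((hN p.1).sqrt * (hN' p.2).sqrt) ⊗ₖ (1 : Matrix (β × γ) (β × γ) ℂ)) *ᵥ
                (M2 p.1 p.2 *ᵥ v))‖
            ≤ en (M1 p.1 p.2 *ᵥ v) *
              en ((((hN p.1).sqrt * (hN' p.2).sqrt) ⊗ₖ (1 : Matrix (β × γ) (β × γ) ℂ)) *ᵥ
                (M2 p.1 p.2 *ᵥ v)) := c1
          _ ≤ en (M1 p.1 p.2 *ᵥ v) *
              (opNorm ((hN p.1).sqrt * (hN' p.2).sqrt) * en (M2 p.1 p.2 *ᵥ v)) :=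
              mul_le_mul_of_nonneg_left c2 e1
          _ ≤ en (M1 p.1 p.2 *ᵥ v) * (s * en (M2 p.1 p.2 *ᵥ v)) :=
              mul_le_mul_of_nonneg_left (mul_le_mul_of_nonneg_right c3 e2) e1
          _ = s * (en (M1 p.1 p.2 *ᵥ v) * en (M2 p.1 p.2 *ᵥ v)) := by ring
      have h3 : (star (Am *ᵥ v) ⬝ᵥ (Bm *ᵥ v)).re
          ≤ ∑ p : X × X, s * (en (M1 p.1 p.2 *ᵥ v) * en (M2 p.1 p.2 *ᵥ v)) := by
        calc (star (Am *ᵥ v) ⬝ᵥ (Bm *ᵥ v)).re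
            ≤ ‖star (Am *ᵥ v) ⬝ᵥ (Bm *ᵥ v)‖ := by
              exact Complex.re_le_norm _
          _ = ‖∑ p : X × X, star v ⬝ᵥ ((N p.1 * N' p.2) ⊗ₖ (P p.1 ⊗ₖ Q p.2)) *ᵥ v‖ := by
              rw [h1]
          _ ≤ ∑ p : X × X, ‖star v ⬝ᵥ ((N p.1 * N' p.2) ⊗ₖ (P p.1 ⊗ₖ Q p.2)) *ᵥ v‖ :=
              norm_sum_le _ _
          _ ≤ _ := Finset.sum_le_sum fun p _ => h2 p
      have h4 : ∑ p : X × X, en (M1 p.1 p.2 *ᵥ v) * en (M2 p.1 p.2 *ᵥ v)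
          ≤ Real.sqrt al * Real.sqrt bl := by
        have hCS := Finset.sum_mul_sq_le_sq_mul_sq Finset.univ
          (fun p : X × X => en (M1 p.1 p.2 *ᵥ v)) (fun p : X × X => en (M2 p.1 p.2 *ᵥ v))
        rw [hsum1, hsum2] at hCS
        have ht0 : 0 ≤ ∑ p : X × X, en (M1 p.1 p.2 *ᵥ v) * en (M2 p.1 p.2 *ᵥ v) :=
          Finset.sum_nonneg fun p _ => mul_nonneg (en_nonneg _) (en_nonneg _)
        calc ∑ p : X × X, en (M1 p.1 p.2 *ᵥ v) * en (M2 p.1 p.2 *ᵥ v)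
            = Real.sqrt ((∑ p : X × X, en (M1 p.1 p.2 *ᵥ v) * en (M2 p.1 p.2 *ᵥ v)) ^ 2) :=
              (Real.sqrt_sq ht0).symm
          _ ≤ Real.sqrt (al * bl) := Real.sqrt_le_sqrt hCS
          _ = Real.sqrt al * Real.sqrt bl := Real.sqrt_mul hal0 _
      calc (star (Am *ᵥ v) ⬝ᵥ (Bm *ᵥ v)).re
          ≤ ∑ p : X × X, s * (en (M1 p.1 p.2 *ᵥ v) * en (M2 p.1 p.2 *ᵥ v)) := h3
        _ = s * ∑ p : X × X, en (M1 p.1 p.2 *ᵥ v) * en (M2 p.1 p.2 *ᵥ v) := by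
            rw [Finset.mul_sum]
        _ ≤ s * (Real.sqrt al * Real.sqrt bl) := mul_le_mul_of_nonneg_left h4 hs
    have hexp : en ((Am + Bm) *ᵥ v) ^ 2
        = en (Am *ᵥ v) ^ 2 + en (Bm *ᵥ v) ^ 2 + 2 * (star (Am *ᵥ v) ⬝ᵥ (Bm *ᵥ v)).re := by
      rw [Matrix.add_mulVec]
      set u := Am *ᵥ v
      set w := Bm *ᵥ v
      have e1 : star (u + w) ⬝ᵥ (u + w)
          = star u ⬝ᵥ u + star w ⬝ᵥ w + (star u ⬝ᵥ w + star w ⬝ᵥ u) := by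
        rw [star_add, add_dotProduct, dotProduct_add, dotProduct_add]
        ring
      have e2 : star w ⬝ᵥ u = star (star u ⬝ᵥ w) := Matrix.star_dotProduct _ _
      have e3 := congrArg Complex.re e1
      rw [e2] at e3
      simp only [Complex.add_re] at e3
      rw [en_sq_re, en_sq_re, en_sq_re] at e3
      have e4 : (star (star u ⬝ᵥ w)).re = (star u ⬝ᵥ w).re := by
        rw [Complex.star_def]
        exact Complex.conj_re _
      rw [e4] at e3
      linarith
    have hsqA := sq_le Am hAm hA1 v
    have hsqB := sq_le Bm hBm hB1 v
    have h2sqrt : 2 * (Real.sqrt al * Real.sqrt bl) ≤ al + bl := by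
      nlinarith [Real.sq_sqrt hal0, Real.sq_sqrt hbl0, sq_nonneg (Real.sqrt al - Real.sqrt bl)]
    have key1 : en ((Am + Bm) *ᵥ v) ^ 2 ≤ (1 + s) * (al + bl) := by
      rw [hexp]
      have : 2 * (star (Am *ᵥ v) ⬝ᵥ (Bm *ᵥ v)).re ≤ s * (al + bl) := by
        have := mul_le_mul_of_nonneg_left h2sqrt hs
        nlinarith
      nlinarith
    have hre : (star v ⬝ᵥ (Am + Bm) *ᵥ v).re = al + bl := by
      rw [Matrix.add_mulVec, dotProduct_add, Complex.add_re]
    rw [hre, en_sq_re v]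
    rcases le_or_gt (al + bl) 0 with h | h
    · have h0 : 0 ≤ (1 + s) * en v ^ 2 := by positivity
      linarith
    · have hcs2 : al + bl ≤ en v * en ((Am + Bm) *ᵥ v) := by
        have h2 : (star v ⬝ᵥ (Am + Bm) *ᵥ v).re ≤ ‖star v ⬝ᵥ ((Am + Bm) *ᵥ v)‖ := by
          exact Complex.re_le_norm _
        have h3 := cs_abs v ((Am + Bm) *ᵥ v)
        rw [hre] at h2
        linarith
      have hfin : (al + bl) ^ 2 ≤ en v ^ 2 * ((1 + s) * (al + bl)) := by
        have e1 := en_nonneg v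
        have e2 := en_nonneg ((Am + Bm) *ᵥ v)
        nlinarith [key1, hcs2]
      nlinarith [hfin, h]
  -- PSD of the slack operator
  have hT : ((((1 + s : ℝ) : ℂ) • (1 : Matrix (A × β × γ) (A × β × γ) ℂ))
      - (Am + Bm)).PosSemidef := by
    refine Matrix.PosSemidef.of_dotProduct_mulVec_nonneg ?_ ?_
    · have h1 : (((1 + s : ℝ) : ℂ) • (1 : Matrix (A × β × γ) (A × β × γ) ℂ)).IsHermitian := by
        show _ᴴ = _
        rw [Matrix.conjTranspose_smul, Matrix.conjTranspose_one]
        congr 1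
        exact Complex.conj_ofReal _
      exact h1.sub (hAm.1.add hBm.1)
    · intro v
      have hval : star v ⬝ᵥ ((((1 + s : ℝ) : ℂ) • (1 : Matrix (A × β × γ) (A × β × γ) ℂ))
          - (Am + Bm)) *ᵥ v
          = ((1 + s : ℝ) : ℂ) * (star v ⬝ᵥ v) - star v ⬝ᵥ (Am + Bm) *ᵥ v := by
        rw [Matrix.sub_mulVec, dotProduct_sub, Matrix.smul_mulVec, Matrix.one_mulVec,
          dotProduct_smul]
        simp [smul_eq_mul]
      rw [hval, Complex.nonneg_iff]
      constructor
      · simp only [Complex.sub_re, Complex.mul_re, Complex.ofReal_re, Complex.ofReal_im]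
        have him : (star v ⬝ᵥ v).im = 0 := by
          rw [dot_self_eq_en_sq]
          simp [← Complex.ofReal_pow]
        rw [him]
        have := hQF v
        simp only [mul_zero, zero_mul, sub_zero]
        linarith
      · simp only [Complex.sub_im, Complex.mul_im, Complex.ofReal_re, Complex.ofReal_im]
        have him : (star v ⬝ᵥ v).im = 0 := by
          rw [dot_self_eq_en_sq]
          simp [← Complex.ofReal_pow]
        have him2 : (star v ⬝ᵥ (Am + Bm) *ᵥ v).im = 0 := herm_form_real (hAm.1.add hBm.1) v
        rw [him, him2]
        ring
  -- conclude via the trace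
  have htr : 0 ≤ (((((1 + s : ℝ) : ℂ) • (1 : Matrix (A × β × γ) (A × β × γ) ℂ))
      - (Am + Bm)) * ρ).trace := psd_mul_trace_nonneg hT hρ
  have hexp2 : ((((1 + s : ℝ) : ℂ) • (1 : Matrix (A × β × γ) (A × β × γ) ℂ))
      - (Am + Bm)) * ρ = ((1 + s : ℝ) : ℂ) • ρ - (Am + Bm) * ρ := by
    rw [Matrix.sub_mul, Matrix.smul_mul, Matrix.one_mul]
  rw [hexp2, Matrix.trace_sub, Matrix.trace_smul, hρt, Complex.nonneg_iff] at htr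
  obtain ⟨htr1, -⟩ := htr
  simp only [Complex.sub_re, Complex.smul_re] at htr1
  have : (((1 + s : ℝ) : ℂ) • (1 : ℂ)).re = 1 + s := by
    simp [smul_eq_mul]
  rw [this] at htr1
  linarith

end key




theorem stmt14 {A X : Type*} [Fintype A] [DecidableEq A] [Fintype X] [Nonempty X]
    {β γ : Type*} [Fintype β] [DecidableEq β] [Fintype γ] [DecidableEq γ]
    (ρ : Matrix (A × β × γ) (A × β × γ) ℂ) (hρ : ρ.PosSemidef ∧ ρ.trace = 1)
    (N : Fin 2 → X → Matrix A A ℂ) (hN : ∀ θ, IsPOVM (N θ))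
    (c : ℝ)
    (hc : ∀ x z : X, opNorm (((hN 0).1 x).sqrt * ((hN 1).1 z).sqrt) ^ 2 ≤ c)
    (P : Fin 2 → X → Matrix β β ℂ) (hP : ∀ θ, IsPOVM (P θ))
    (Q : Fin 2 → X → Matrix γ γ ℂ) (hQ : ∀ θ, IsPOVM (Q θ)) :
    (1 / 2 : ℝ) * ∑ θ : Fin 2, ∑ x : X,
        (((N θ x ⊗ₖ (P θ x ⊗ₖ (1 : Matrix γ γ ℂ))) * ρ).trace).re +
      (1 / 2 : ℝ) * ∑ θ : Fin 2, ∑ x : X,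
        (((N θ x ⊗ₖ ((1 : Matrix β β ℂ) ⊗ₖ Q θ x)) * ρ).trace).re
      ≤ 1 + Real.sqrt c := by
  classical
  obtain ⟨hρ1, hρ2⟩ := hρ
  have hc0 : (0:ℝ) ≤ c :=
    le_trans (sq_nonneg _) (hc (Classical.arbitrary X) (Classical.arbitrary X))
  have hs0 : (0:ℝ) ≤ Real.sqrt c := Real.sqrt_nonneg c
  have hc1 : ∀ x z, opNorm (((hN 0).1 x).sqrt * ((hN 1).1 z).sqrt) ≤ Real.sqrt c := by
    intro x z
    rw [Real.le_sqrt (opNorm_nonneg _) hc0]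
    exact hc x z
  have hc2 : ∀ x z, opNorm (((hN 1).1 x).sqrt * ((hN 0).1 z).sqrt) ≤ Real.sqrt c := by
    intro x z
    have he : ((hN 1).1 x).sqrt * ((hN 0).1 z).sqrt
        = (((hN 0).1 z).sqrt * ((hN 1).1 x).sqrt)ᴴ := by
      rw [Matrix.conjTranspose_mul, ((hN 0).1 z).posSemidef_sqrt.1.eq,
        ((hN 1).1 x).posSemidef_sqrt.1.eq]
    rw [he, opNorm_conjT]
    exact hc1 z x
  have hlin : ∀ (f : X → Matrix (A × β × γ) (A × β × γ) ℂ),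
      ∑ x, (((f x) * ρ).trace).re = (((∑ x, f x) * ρ).trace).re := by
    intro f
    rw [Finset.sum_mul, Matrix.trace_sum, Complex.re_sum]
  have g1 := key_lemma (N 0) (N 1) (P 0) (Q 1) (hN 0).1 (hN 1).1 (hP 0).1 (hQ 1).1
    (hN 0).2 (hN 1).2 (hP 0).2 (hQ 1).2 (Real.sqrt c) hs0 hc1 ρ hρ1 hρ2
  have g2 := key_lemma (N 1) (N 0) (P 1) (Q 0) (hN 1).1 (hN 0).1 (hP 1).1 (hQ 0).1
    (hN 1).2 (hN 0).2 (hP 1).2 (hQ 0).2 (Real.sqrt c) hs0 hc2 ρ hρ1 hρ2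
  rw [Matrix.add_mul, Matrix.trace_add, Complex.add_re] at g1 g2
  rw [Fin.sum_univ_two, Fin.sum_univ_two, hlin, hlin, hlin, hlin]
  linarith
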